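/- arXiv:1605.08719 — 7 statements merged into one kernel-verified Lean document; each statement's English description precedes it below -/
import Mathlib

section
/- For every real number α > 0, the series ∑_{j=0}^∞ |c_j^α| of absolute values of the Grünwald–Letnikov coefficients converges (i.e., the sequence (c_j^α)_{j∈ℕ} is absolutely summable). -/
open scoped BigOperators

/-- Grünwald–Letnikov coefficients: `c_j^α = (-1)^j C(α,j) = ∏_{i=0}^{j-1} (i-α)/(i+1)`. -/
noncomputable def glCoef (α : ℝ) (j : ℕ) : ℝ :=
  ∏ i ∈ Finset.range j, ((i : ℝ) - α) / ((i : ℝ) + 1)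

/-!
The partial sums of `c^α` are the coefficients `c^(α-1)` (Pascal's rule), and for `α ≥ 0` these
are bounded, since `|c_n^(α-1)|` decreases once `n ≥ α - 1`. Moreover `c_j^α` has constant sign
for `j ≥ α`, because every further factor `(j - α)/(j + 1)` is nonnegative. A sequence of eventually
constant sign with bounded partial sums is absolutely summable.
-/

open Finset

theorem summable_of_sum_range_le_of_eventually_nonneg {f : ℕ → ℝ} {N : ℕ} {C : ℝ}
    (hf : ∀ j, N ≤ j → 0 ≤ f j) (h : ∀ n, ∑ j ∈ range n, f j ≤ C) : Summable f := by
  rw [← summable_nat_add_iff N]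
  refine summable_of_sum_range_le (c := C - ∑ j ∈ range N, f j)
    (fun i => hf _ (Nat.le_add_left N i)) fun n => ?_
  have := h (N + n)
  rw [sum_range_add] at this
  simp only [add_comm _ N]
  linarith

theorem glCoef_zero (α : ℝ) : glCoef α 0 = 1 := prod_range_zero _

theorem glCoef_succ (α : ℝ) (n : ℕ) :
    glCoef α (n + 1) = glCoef α n * (((n : ℝ) - α) / ((n : ℝ) + 1)) :=
  prod_range_succ _ _

theorem glCoef_ne_zero {α : ℝ} {n : ℕ} (h : ∀ i < n, (i : ℝ) ≠ α) : glCoef α n ≠ 0 :=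
  prod_ne_zero_iff.2 fun i hi =>
    div_ne_zero (sub_ne_zero.2 (h i (mem_range.1 hi))) (Nat.cast_add_one_ne_zero i)

theorem succ_mul_glCoef_succ (α : ℝ) (n : ℕ) :
    ((n : ℝ) + 1) * glCoef α (n + 1) = -α * glCoef (α - 1) n := by
  induction n with
  | zero => simp [glCoef_succ, glCoef_zero]
  | succ n ih =>
    rw [glCoef_succ α (n + 1), glCoef_succ (α - 1) n, ← mul_assoc (-α), ← ih]
    push_cast
    field_simp
    ring

theorem sum_range_succ_glCoef (α : ℝ) (n : ℕ) :
    ∑ j ∈ range (n + 1), glCoef α j = glCoef (α - 1) n := by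
  induction n with
  | zero => simp [glCoef_zero]
  | succ n ih =>
    have h := succ_mul_glCoef_succ α n
    rw [sum_range_succ, ih, glCoef_succ (α - 1) n]
    field_simp at h ⊢
    linarith

theorem abs_glCoef_le_abs_glCoef {β : ℝ} (hβ : -1 ≤ β) {n m : ℕ} (hn : β ≤ n) (hnm : n ≤ m) :
    |glCoef β m| ≤ |glCoef β n| := by
  induction m, hnm using Nat.le_induction with
  | base => rfl
  | succ m hnm ih =>
    have hm : β ≤ m := hn.trans (Nat.cast_le.2 hnm)
    have hfactor : |((m : ℝ) - β) / ((m : ℝ) + 1)| ≤ 1 := by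
      rw [abs_div, abs_of_nonneg (sub_nonneg.2 hm), abs_of_pos (Nat.cast_add_one_pos m),
        div_le_one (Nat.cast_add_one_pos m)]
      linarith
    rw [glCoef_succ, abs_mul]
    exact (mul_le_of_le_one_right (abs_nonneg _) hfactor).trans ih

theorem exists_abs_glCoef_le {β : ℝ} (hβ : -1 ≤ β) : ∃ C, ∀ m, |glCoef β m| ≤ C := by
  set N := ⌈β⌉₊
  have hle : ∀ j ∈ range (N + 1), |glCoef β j| ≤ ∑ i ∈ range (N + 1), |glCoef β i| :=
    fun j hj => single_le_sum (f := fun i => |glCoef β i|) (fun i _ => abs_nonneg _) hj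
  refine ⟨∑ i ∈ range (N + 1), |glCoef β i|, fun m => ?_⟩
  rcases le_total m N with hm | hm
  · exact hle m (mem_range.2 (Nat.lt_succ_of_le hm))
  · exact (abs_glCoef_le_abs_glCoef hβ (Nat.le_ceil β) hm).trans (hle N (self_mem_range_succ N))

theorem exists_abs_sum_range_glCoef_le {α : ℝ} (hα : 0 ≤ α) :
    ∃ C, ∀ n, |∑ j ∈ range n, glCoef α j| ≤ C := by
  obtain ⟨C, hC⟩ := exists_abs_glCoef_le (β := α - 1) (by linarith)
  refine ⟨C, fun n => ?_⟩
  cases n with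
  | zero => simpa using (abs_nonneg _).trans (hC 0)
  | succ n => rw [sum_range_succ_glCoef]; exact hC n

theorem glCoef_mul_glCoef_nonneg {α : ℝ} {n m : ℕ} (hn : α ≤ n) (hnm : n ≤ m) :
    0 ≤ glCoef α n * glCoef α m := by
  induction m, hnm using Nat.le_induction with
  | base => exact mul_self_nonneg _
  | succ m hnm ih =>
    have hm : α ≤ m := hn.trans (Nat.cast_le.2 hnm)
    rw [glCoef_succ, ← mul_assoc]
    exact mul_nonneg ih (div_nonneg (sub_nonneg.2 hm) (Nat.cast_add_one_pos m).le)

/-- For every `α > 0`, the sequence of Grünwald–Letnikov coefficients is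
absolutely summable. -/
theorem glCoef_abs_summable (α : ℝ) (hα : 0 < α) :
    Summable (fun j : ℕ => |glCoef α j|) := by
  set N := ⌈α⌉₊
  set s := glCoef α N
  have hs : s ≠ 0 := glCoef_ne_zero fun i hi => (Nat.lt_ceil.1 hi).ne
  obtain ⟨C, hC⟩ := exists_abs_sum_range_glCoef_le hα.le
  have hsummable : Summable fun j => s * glCoef α j := by
    refine summable_of_sum_range_le_of_eventually_nonneg (N := N) (C := |s| * C)
      (fun j hj => glCoef_mul_glCoef_nonneg (Nat.le_ceil α) hj) fun n => ?_
    rw [← mul_sum]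
    exact (le_abs_self _).trans (by rw [abs_mul]; gcongr; exact hC n)
  exact ((summable_mul_left_iff hs).1 hsummable).abs
end

section
/- Let α > 0, ν ∈ ℕ, and let X ⊆ ℝ^n be nonempty, convex and compact. Then the set T := { ∑_{j=ν+1}^∞ c_j^α y_j : y_j ∈ X for all j > ν } (all such series converge absolutely, since X is bounded and ∑_j |c_j^α| < ∞) is convex and compact. If, in addition, 0 lies in the interior of X and α is not an integer, then 0 lies in the interior of T. -/
open scoped BigOperators

/-- The infinite Minkowski sum `⊕_{j=ν+1}^∞ c_j^α X`, realized as the set of all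
convergent sums `∑_{j=ν+1}^∞ c_j^α y_j` with `y_j ∈ X`. -/
def glTailSumSet (α : ℝ) (ν : ℕ) {n : ℕ} (X : Set (EuclideanSpace ℝ (Fin n))) :
    Set (EuclideanSpace ℝ (Fin n)) :=
  {t | ∃ y : ℕ → EuclideanSpace ℝ (Fin n), (∀ j : ℕ, y j ∈ X) ∧
        HasSum (fun j : ℕ => glCoef α (ν + 1 + j) • y j) t}

/-!
For `j ≥ α` the ratio `c_{j+1}^α / c_j^α = (j - α)/(j + 1)` lies in `[0, 1]` (as `α ≥ -1`), so the
coefficients eventually keep one sign and decrease in absolute value. Since the partial sums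
`∑_{j ≤ N} c_j^α = c_N^{α-1}` are bounded, the eventually one-signed series `∑ c_j^α` converges,
hence absolutely. With summable weights and a bounded `X`, the set `T` is the image of the compact
product `X^ℕ` under the continuous map `y ↦ ∑ c_j y_j`, and convex because summation is linear.
Finally `T ⊇ c_{ν+1}^α • X`, a neighbourhood of `0` when `c_{ν+1}^α ≠ 0`, i.e. when `α ∉ ℕ`.
-/

open Finset
open scoped Pointwise

lemma summable_of_forall_mul_nonneg {f : ℕ → ℝ} (hsign : ∀ i j, 0 ≤ f i * f j) {C : ℝ}
    (hC : ∀ N, |∑ j ∈ range N, f j| ≤ C) : Summable f := by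
  by_cases hnonneg : ∀ j, 0 ≤ f j
  · exact summable_of_sum_range_le hnonneg fun N => (le_abs_self _).trans (hC N)
  · push Not at hnonneg
    obtain ⟨k, hk⟩ := hnonneg
    have hnonpos : ∀ j, 0 ≤ -f j := fun j => by nlinarith [hsign k j]
    refine summable_neg_iff.1 (summable_of_sum_range_le (c := C) hnonpos fun N => ?_)
    rw [sum_neg_distrib]
    exact (neg_le_abs _).trans (hC N)

namespace glCoef

lemma succ (α : ℝ) (j : ℕ) : glCoef α (j + 1) = glCoef α j * ((j - α) / (j + 1)) :=
  prod_range_succ _ _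

lemma succ_eq_mul_sub_one (α : ℝ) (j : ℕ) :
    glCoef α (j + 1) = -α / (j + 1) * glCoef (α - 1) j := by
  induction j with
  | zero => simp [glCoef]
  | succ j ih =>
    rw [succ, ih, succ (α - 1)]
    push_cast
    field_simp
    ring

lemma succ_eq_sub (α : ℝ) (j : ℕ) :
    glCoef α (j + 1) = glCoef (α - 1) (j + 1) - glCoef (α - 1) j := by
  rw [succ_eq_mul_sub_one, succ]
  field_simp
  ring

lemma sum_range_succ (α : ℝ) (N : ℕ) :
    ∑ j ∈ range (N + 1), glCoef α j = glCoef (α - 1) N := by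
  induction N with
  | zero => simp [glCoef]
  | succ N ih => rw [Finset.sum_range_succ, ih, succ_eq_sub]; ring

lemma exists_add_eq_mul {α : ℝ} (hα : -1 ≤ α) {M : ℕ} (hM : α ≤ M) (j : ℕ) :
    ∃ p ∈ Set.Icc (0 : ℝ) 1, glCoef α (M + j) = glCoef α M * p := by
  have hfactor : ∀ i ∈ range j,
      ((M + i : ℕ) - α) / ((M + i : ℕ) + 1) ∈ Set.Icc (0 : ℝ) 1 := fun i _ => by
    have hMi : (M : ℝ) ≤ (M + i : ℕ) := by exact_mod_cast M.le_add_right i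
    constructor
    · exact div_nonneg (by linarith) (by positivity)
    · rw [div_le_one (by positivity)]
      linarith
  exact ⟨_, ⟨prod_nonneg fun i hi => (hfactor i hi).1, prod_le_one (fun i hi => (hfactor i hi).1)
    fun i hi => (hfactor i hi).2⟩, prod_range_add _ _ _⟩

lemma exists_forall_abs_le {α : ℝ} (hα : -1 ≤ α) : ∃ C, ∀ j, |glCoef α j| ≤ C := by
  obtain ⟨M, hM⟩ : ∃ M : ℕ, α ≤ M := ⟨⌈α⌉₊, Nat.le_ceil α⟩
  refine ⟨∑ i ∈ range (M + 1), |glCoef α i|, fun j => ?_⟩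
  have hle_sum : ∀ i ≤ M, |glCoef α i| ≤ ∑ i ∈ range (M + 1), |glCoef α i| := fun i hi =>
    single_le_sum (f := fun i => |glCoef α i|) (fun _ _ => abs_nonneg _)
      (mem_range.2 (Nat.lt_succ_of_le hi))
  rcases le_or_gt j M with hjM | hMj
  · exact hle_sum j hjM
  · obtain ⟨k, rfl⟩ := Nat.exists_eq_add_of_lt hMj
    obtain ⟨p, hp, hprod⟩ := exists_add_eq_mul hα hM (k + 1)
    calc |glCoef α (M + (k + 1))| = |glCoef α M| * p := by
          rw [hprod, abs_mul, abs_of_nonneg hp.1]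
      _ ≤ |glCoef α M| := mul_le_of_le_one_right (abs_nonneg _) hp.2
      _ ≤ _ := hle_sum M le_rfl

theorem summable_abs {α : ℝ} (hα : 0 < α) : Summable fun j => |glCoef α j| := by
  obtain ⟨m, hm⟩ : ∃ m : ℕ, α ≤ (m + 1 : ℕ) := ⟨⌈α⌉₊, by push_cast; linarith [Nat.le_ceil α]⟩
  obtain ⟨C, hC⟩ := exists_forall_abs_le (by linarith : -1 ≤ α - 1)
  rw [summable_abs_iff, ← summable_nat_add_iff (m + 1)]
  refine summable_of_forall_mul_nonneg (C := C + C) (fun i j => ?_) (fun N => ?_)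
  · obtain ⟨p, hp, hpi⟩ := exists_add_eq_mul (by linarith) hm i
    obtain ⟨q, hq, hqj⟩ := exists_add_eq_mul (by linarith) hm j
    rw [add_comm i, add_comm j, hpi, hqj]
    nlinarith [mul_nonneg hp.1 hq.1, mul_self_nonneg (glCoef α (m + 1))]
  · have htail : ∑ j ∈ range N, glCoef α (j + (m + 1)) =
        glCoef (α - 1) (m + N) - glCoef (α - 1) m := by
      rw [← sum_range_succ, ← sum_range_succ, show m + N + 1 = m + 1 + N by omega, sum_range_add]
      simp only [add_comm _ (m + 1), add_sub_cancel_left]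
    rw [htail]
    exact (abs_sub _ _).trans (add_le_add (hC _) (hC _))

lemma ne_zero {α : ℝ} (hα : ∀ m : ℕ, α ≠ m) (j : ℕ) : glCoef α j ≠ 0 :=
  prod_ne_zero_iff.2 fun i _ => div_ne_zero (sub_ne_zero.2 (hα i).symm) (by positivity)

end glCoef

section seriesSumSet

variable {E : Type*}

/-- `glTailSumSet α ν X` is the case `c j = glCoef α (ν + 1 + j)`. -/
def seriesSumSet [AddCommMonoid E] [Module ℝ E] [TopologicalSpace E] (c : ℕ → ℝ) (X : Set E) :
    Set E :=
  {t | ∃ y : ℕ → E, (∀ j, y j ∈ X) ∧ HasSum (fun j => c j • y j) t}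

lemma convex_seriesSumSet [AddCommMonoid E] [Module ℝ E] [TopologicalSpace E] [ContinuousAdd E]
    [ContinuousConstSMul ℝ E] (c : ℕ → ℝ) {X : Set E} (hX : Convex ℝ X) :
    Convex ℝ (seriesSumSet c X) := by
  rintro _ ⟨y, hy, hsy⟩ _ ⟨z, hz, hsz⟩ a b ha hb hab
  refine ⟨fun j => a • y j + b • z j, fun j => hX (hy j) (hz j) ha hb hab, ?_⟩
  simpa only [smul_add, smul_comm (c _) a, smul_comm (c _) b] using
    (hsy.const_smul a).add (hsz.const_smul b)

variable [NormedAddCommGroup E] [NormedSpace ℝ E]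

lemma summable_norm_smul_of_isBounded {c : ℕ → ℝ} (hc : Summable fun j => ‖c j‖) {X : Set E}
    (hX : Bornology.IsBounded X) {y : ℕ → E} (hy : ∀ j, y j ∈ X) :
    Summable fun j => ‖c j • y j‖ := by
  obtain ⟨C, hC⟩ := isBounded_iff_forall_norm_le.1 hX
  refine (hc.mul_right C).of_nonneg_of_le (fun j => norm_nonneg _) fun j => ?_
  rw [norm_smul]
  exact mul_le_mul_of_nonneg_left (hC _ (hy j)) (norm_nonneg _)

lemma seriesSumSet_eq_image [CompleteSpace E] {c : ℕ → ℝ} (hc : Summable fun j => ‖c j‖)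
    {X : Set E} (hX : Bornology.IsBounded X) :
    seriesSumSet c X = (fun y : ℕ → E => ∑' j, c j • y j) '' Set.univ.pi fun _ => X := by
  ext t
  constructor
  · rintro ⟨y, hy, hsum⟩
    exact ⟨y, fun j _ => hy j, hsum.tsum_eq⟩
  · rintro ⟨y, hy, rfl⟩
    have hy' : ∀ j, y j ∈ X := fun j => hy j (Set.mem_univ j)
    exact ⟨y, hy', (summable_norm_smul_of_isBounded hc hX hy').of_norm.hasSum⟩

lemma isCompact_seriesSumSet [CompleteSpace E] {c : ℕ → ℝ} (hc : Summable fun j => ‖c j‖)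
    {X : Set E} (hX : IsCompact X) : IsCompact (seriesSumSet c X) := by
  obtain ⟨C, hC⟩ := isBounded_iff_forall_norm_le.1 hX.isBounded
  rw [seriesSumSet_eq_image hc hX.isBounded]
  refine (isCompact_univ_pi fun _ => hX).image_of_continuousOn
    (continuousOn_tsum (fun j => ((continuous_apply j).const_smul (c j)).continuousOn)
      (hc.mul_right C) fun j y hy => ?_)
  rw [norm_smul]
  exact mul_le_mul_of_nonneg_left (hC _ (hy j (Set.mem_univ j))) (norm_nonneg _)

lemma smul_subset_seriesSumSet (c : ℕ → ℝ) {X : Set E} (hX : (0 : E) ∈ X) :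
    c 0 • X ⊆ seriesSumSet c X := by
  rintro _ ⟨x, hx, rfl⟩
  refine ⟨Pi.single 0 x, fun j => ?_, ?_⟩
  · rcases eq_or_ne j 0 with rfl | hj
    · simpa using hx
    · simpa [hj] using hX
  · convert hasSum_single (f := fun j => c j • Pi.single (M := fun _ => E) 0 x j) 0
      (fun j hj => by simp [hj]) using 1
    simp

lemma zero_mem_interior_seriesSumSet {c : ℕ → ℝ} (hc : c 0 ≠ 0) {X : Set E}
    (hX : (0 : E) ∈ interior X) : (0 : E) ∈ interior (seriesSumSet c X) := by
  rw [mem_interior_iff_mem_nhds] at hX ⊢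
  exact Filter.mem_of_superset ((set_smul_mem_nhds_zero_iff hc).2 hX)
    (smul_subset_seriesSumSet c (mem_of_mem_nhds hX))

end seriesSumSet

theorem gl_tail_minkowski_sum_convex_compact_general (α : ℝ) (hα : 0 < α) (ν : ℕ) (n : ℕ)
    (X : Set (EuclideanSpace ℝ (Fin n)))
    (hconv : Convex ℝ X) (hcomp : IsCompact X) :
    (∀ y : ℕ → EuclideanSpace ℝ (Fin n), (∀ j : ℕ, y j ∈ X) →
        Summable (fun j : ℕ => ‖glCoef α (ν + 1 + j) • y j‖)) ∧
    Convex ℝ (glTailSumSet α ν X) ∧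
    IsCompact (glTailSumSet α ν X) ∧
    ((0 : EuclideanSpace ℝ (Fin n)) ∈ interior X → (∀ m : ℕ, α ≠ (m : ℝ)) →
      (0 : EuclideanSpace ℝ (Fin n)) ∈ interior (glTailSumSet α ν X)) := by
  have hc : Summable fun j => ‖glCoef α (ν + 1 + j)‖ := by
    simpa only [Real.norm_eq_abs, add_comm _ (ν + 1)] using
      (summable_nat_add_iff (ν + 1)).2 (glCoef.summable_abs hα)
  exact ⟨fun _ hy => summable_norm_smul_of_isBounded hc hcomp.isBounded hy,
    convex_seriesSumSet _ hconv, isCompact_seriesSumSet hc hcomp,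
    fun h0 hα' => zero_mem_interior_seriesSumSet (glCoef.ne_zero hα' (ν + 1 + 0)) h0⟩

/-- For `α > 0`, `ν ∈ ℕ` and `X ⊆ ℝ^n` nonempty, convex and compact, the infinite
Minkowski sum `T = ⊕_{j=ν+1}^∞ c_j^α X` (whose defining series converge absolutely)
is convex and compact; moreover if `0` is interior to `X` and `α` is not an
integer, then `0` is interior to `T`. -/
theorem gl_tail_minkowski_sum_convex_compact (α : ℝ) (hα : 0 < α) (ν : ℕ) (n : ℕ)
    (X : Set (EuclideanSpace ℝ (Fin n))) (hne : X.Nonempty)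
    (hconv : Convex ℝ X) (hcomp : IsCompact X) :
    (∀ y : ℕ → EuclideanSpace ℝ (Fin n), (∀ j : ℕ, y j ∈ X) →
        Summable (fun j : ℕ => ‖glCoef α (ν + 1 + j) • y j‖)) ∧
    Convex ℝ (glTailSumSet α ν X) ∧
    IsCompact (glTailSumSet α ν X) ∧
    ((0 : EuclideanSpace ℝ (Fin n)) ∈ interior X → (∀ m : ℕ, α ≠ (m : ℝ)) →
      (0 : EuclideanSpace ℝ (Fin n)) ∈ interior (glTailSumSet α ν X)) :=
  gl_tail_minkowski_sum_convex_compact_general α hα ν n X hconv hcomp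
end

section
/- In the setting of the tube-based feedback (x̃_{k+1} = A x̃_k + B u_k + G d_k, u_k = v_k + K(x̃_k − z̃_k), z̃_{k+1} = A z̃_k + B v_k, x̃_0 = z̃_0), suppose additionally that D ⊆ ℝ^p, that d_k ∈ D for all k, and that S ⊆ ℝ^N satisfies 0 ∈ S and (A+BK)·S ⊕ G·D ⊆ S (robust positive invariance). Then e_k = x̃_k − z̃_k ∈ S for all k ∈ ℕ, i.e., x̃_k ∈ {z̃_k} ⊕ S. Consequently, for any sets X̃ ⊆ ℝ^N and U ⊆ ℝ^m, if z̃_k ∈ X̃ ⊖ S and v_k ∈ U ⊖ (K·S) for all k, then the controlled trajectories satisfy the constraints x̃_k ∈ X̃ and u_k ∈ U for all k ∈ ℕ. -/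
open scoped Pointwise

/-- Pontryagin difference: `A ⊖ B = {a ∈ A : a + b ∈ A for all b ∈ B}`. -/
def pontryaginDiff {E : Type*} [AddCommGroup E] (A B : Set E) : Set E :=
  {a ∈ A | ∀ b ∈ B, a + b ∈ A}

/-!
The deviation `e_k = x̃_k - z̃_k` obeys the closed-loop recursion `e_{k+1} = (A + BK) e_k + G d_k`
with `e_0 = 0`, so robust positive invariance of `S` keeps it in `S` by induction. Once
`x̃_k = z̃_k + e_k` and `u_k = v_k + K e_k` with `e_k ∈ S`, membership of `z̃_k` and `v_k` in the
tightened sets `X̃ ⊖ S` and `U ⊖ K·S` is exactly what puts `x̃_k` in `X̃` and `u_k` in `U`.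
-/

theorem add_mem_of_mem_pontryaginDiff {E : Type*} [AddCommGroup E] {X S : Set E} {a b : E}
    (ha : a ∈ pontryaginDiff X S) (hb : b ∈ S) : a + b ∈ X :=
  ha.2 b hb

theorem mem_of_mem_pontryaginDiff_of_sub_mem {E : Type*} [AddCommGroup E] {X S : Set E}
    {x z : E} (hz : z ∈ pontryaginDiff X S) (hxz : x - z ∈ S) : x ∈ X := by
  simpa using add_mem_of_mem_pontryaginDiff hz hxz

theorem mem_singleton_add_of_sub_mem {E : Type*} [AddCommGroup E] {S : Set E} {x z : E}
    (hxz : x - z ∈ S) : x ∈ {z} + S :=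
  ⟨z, rfl, x - z, hxz, add_sub_cancel z x⟩

/-- `S` is robustly positively invariant for `e ↦ f e + w` with disturbances `w ∈ W`. -/
def IsRobustPositivelyInvariant {E : Type*} [Add E] (f : E → E) (W S : Set E) : Prop :=
  f '' S + W ⊆ S

theorem IsRobustPositivelyInvariant.mem_of_recurrence {E : Type*} [Add E] {f : E → E}
    {W S : Set E} (hS : IsRobustPositivelyInvariant f W S) {e w : ℕ → E} (he0 : e 0 ∈ S)
    (hw : ∀ k, w k ∈ W) (he : ∀ k, e (k + 1) = f (e k) + w k) (k : ℕ) : e k ∈ S := by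
  induction k with
  | zero => exact he0
  | succ k ih => exact he k ▸ hS (Set.add_mem_add (Set.mem_image_of_mem f ih) (hw k))

section TubeDynamics

variable {R X Y W : Type*} [Semiring R]
  [TopologicalSpace X] [AddCommGroup X] [Module R X] [ContinuousAdd X]
  [TopologicalSpace Y] [AddCommGroup Y] [Module R Y]
  [TopologicalSpace W] [AddCommGroup W] [Module R W]
  {A : X →L[R] X} {B : Y →L[R] X} {K : X →L[R] Y} {G : W →L[R] X}
  {xt zt : ℕ → X} {u v : ℕ → Y} {d : ℕ → W}

theorem tube_deviation_succ (hu : ∀ k, u k = v k + K (xt k - zt k))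
    (hx : ∀ k, xt (k + 1) = A (xt k) + B (u k) + G (d k))
    (hz : ∀ k, zt (k + 1) = A (zt k) + B (v k)) (k : ℕ) :
    xt (k + 1) - zt (k + 1) = (A + B.comp K) (xt k - zt k) + G (d k) := by
  simp only [hx, hz, hu, add_apply, ContinuousLinearMap.comp_apply, map_add, map_sub]
  abel

theorem tube_deviation_mem (hu : ∀ k, u k = v k + K (xt k - zt k))
    (hx : ∀ k, xt (k + 1) = A (xt k) + B (u k) + G (d k))
    (hz : ∀ k, zt (k + 1) = A (zt k) + B (v k)) (h0 : xt 0 = zt 0)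
    {D : Set W} (hd : ∀ k, d k ∈ D) {S : Set X} (hS0 : 0 ∈ S)
    (hinv : IsRobustPositivelyInvariant (A + B.comp K) (G '' D) S) (k : ℕ) :
    xt k - zt k ∈ S :=
  hinv.mem_of_recurrence (e := fun k => xt k - zt k) (by rwa [h0, sub_self])
    (fun k => Set.mem_image_of_mem G (hd k)) (tube_deviation_succ hu hx hz) k

end TubeDynamics

/-- Tube-based MPC: if the disturbances stay in `D` and `S` is robustly
positively invariant for the deviation dynamics (`(A+BK)·S ⊕ G·D ⊆ S`, `0 ∈ S`),
then the deviation `x̃_k − z̃_k` stays in `S` for all `k`; consequently, if the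
nominal trajectory satisfies the tightened constraints `z̃_k ∈ X̃ ⊖ S` and
`v_k ∈ U ⊖ K·S`, then the true trajectories satisfy `x̃_k ∈ X̃` and `u_k ∈ U`. -/
theorem tube_mpc_constraint_satisfaction (N m p : ℕ)
    (A : EuclideanSpace ℝ (Fin N) →L[ℝ] EuclideanSpace ℝ (Fin N))
    (B : EuclideanSpace ℝ (Fin m) →L[ℝ] EuclideanSpace ℝ (Fin N))
    (K : EuclideanSpace ℝ (Fin N) →L[ℝ] EuclideanSpace ℝ (Fin m))
    (G : EuclideanSpace ℝ (Fin p) →L[ℝ] EuclideanSpace ℝ (Fin N))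
    (xt zt : ℕ → EuclideanSpace ℝ (Fin N))
    (u v : ℕ → EuclideanSpace ℝ (Fin m))
    (d : ℕ → EuclideanSpace ℝ (Fin p))
    (hu : ∀ k : ℕ, u k = v k + K (xt k - zt k))
    (hx : ∀ k : ℕ, xt (k + 1) = A (xt k) + B (u k) + G (d k))
    (hz : ∀ k : ℕ, zt (k + 1) = A (zt k) + B (v k))
    (h0 : xt 0 = zt 0)
    (D : Set (EuclideanSpace ℝ (Fin p)))
    (hd : ∀ k : ℕ, d k ∈ D)
    (S : Set (EuclideanSpace ℝ (Fin N)))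
    (hS0 : (0 : EuclideanSpace ℝ (Fin N)) ∈ S)
    (hinv : (fun e => (A + B.comp K) e) '' S + (fun w => G w) '' D ⊆ S) :
    (∀ k : ℕ, xt k - zt k ∈ S) ∧
    (∀ k : ℕ, xt k ∈ {zt k} + S) ∧
    (∀ (Xt : Set (EuclideanSpace ℝ (Fin N))) (U : Set (EuclideanSpace ℝ (Fin m))),
      (∀ k : ℕ, zt k ∈ pontryaginDiff Xt S) →
      (∀ k : ℕ, v k ∈ pontryaginDiff U ((fun e => K e) '' S)) →
      ∀ k : ℕ, xt k ∈ Xt ∧ u k ∈ U) := by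
  have hdev : ∀ k, xt k - zt k ∈ S := tube_deviation_mem hu hx hz h0 hd hS0 hinv
  refine ⟨hdev, fun k => mem_singleton_add_of_sub_mem (hdev k), fun Xt U hXt hU k => ⟨?_, ?_⟩⟩
  · exact mem_of_mem_pontryaginDiff_of_sub_mem (hXt k) (hdev k)
  · exact hu k ▸ add_mem_of_mem_pontryaginDiff (hU k) (Set.mem_image_of_mem K (hdev k))
end

section
/- Let A_K be an N×N real matrix with ∑_{i=0}^∞ ‖A_K^i‖ < ∞ (operator norm), let G be an N×p real matrix, and let D ⊆ ℝ^p be nonempty and compact. Then every series ∑_{i=0}^∞ A_K^i G w_i with w_i ∈ D converges absolutely, and the set S_∞ := { ∑_{i=0}^∞ A_K^i G w_i : w_i ∈ D for all i ∈ ℕ } is nonempty and compact. If D is moreover convex, then S_∞ is convex. -/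
/-!
Write `Lᵢ = A_K^i ∘ G`; then `‖Lᵢ‖ ≤ ‖A_K^i‖ ‖G‖` is summable. If `‖w‖ ≤ C` on `D`, the terms
`Lᵢ wᵢ` are dominated by `C ‖Lᵢ‖`, uniformly over sequences with values in `D`. Hence every defining
series converges absolutely, and by uniform convergence the map `w ↦ ∑ᵢ Lᵢ wᵢ` is continuous on the
set `Dᴺ` of `D`-valued sequences, which is compact in the product topology by Tychonoff. `S_∞` is the
image of `Dᴺ` under this map, so it is compact; convexity is inherited termwise from `D` by linearity.
-/

open scoped BigOperators

/-- The infinite Minkowski sum `S_∞ = ⊕_{i=0}^∞ A_K^i G D`, realized as the set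
of all convergent sums `∑_{i=0}^∞ A_K^i G w_i` with `w_i ∈ D`. -/
def Sinf {N p : ℕ}
    (AK : EuclideanSpace ℝ (Fin N) →L[ℝ] EuclideanSpace ℝ (Fin N))
    (G : EuclideanSpace ℝ (Fin p) →L[ℝ] EuclideanSpace ℝ (Fin N))
    (D : Set (EuclideanSpace ℝ (Fin p))) : Set (EuclideanSpace ℝ (Fin N)) :=
  {s | ∃ w : ℕ → EuclideanSpace ℝ (Fin p), (∀ i : ℕ, w i ∈ D) ∧
        HasSum (fun i : ℕ => (AK ^ i) (G (w i))) s}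

open Set

section SeriesRange

variable {E F : Type*} [NormedAddCommGroup E] [NormedSpace ℝ E]
  [NormedAddCommGroup F] [NormedSpace ℝ F]

def seriesRange (L : ℕ → E →L[ℝ] F) (D : Set E) : Set F :=
  {s | ∃ w : ℕ → E, (∀ i, w i ∈ D) ∧ HasSum (fun i => L i (w i)) s}

variable {L : ℕ → E →L[ℝ] F} {D : Set E} {C : ℝ}

theorem summable_norm_apply_of_norm_le (hL : Summable fun i => ‖L i‖) {w : ℕ → E}
    (hw : ∀ i, ‖w i‖ ≤ C) : Summable fun i => ‖L i (w i)‖ :=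
  (hL.mul_right C).of_nonneg_of_le (fun _ => norm_nonneg _)
    fun i => (L i).le_opNorm_of_le (hw i)

theorem continuousOn_tsum_apply [CompleteSpace F] (hL : Summable fun i => ‖L i‖)
    (hC : ∀ x ∈ D, ‖x‖ ≤ C) :
    ContinuousOn (fun w : ℕ → E => ∑' i, L i (w i)) (univ.pi fun _ => D) :=
  continuousOn_tsum (fun i => ((L i).continuous.comp (continuous_apply i)).continuousOn)
    (hL.mul_right C) fun i _ hw => (L i).le_opNorm_of_le (hC _ (hw i (mem_univ i)))

theorem seriesRange_eq_image [CompleteSpace F] (hL : Summable fun i => ‖L i‖)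
    (hC : ∀ x ∈ D, ‖x‖ ≤ C) :
    seriesRange L D = (fun w : ℕ → E => ∑' i, L i (w i)) '' univ.pi fun _ => D := by
  ext s
  simp only [seriesRange, mem_image, mem_univ_pi, mem_ofPred_eq]
  constructor
  · rintro ⟨w, hw, hs⟩
    exact ⟨w, hw, hs.tsum_eq⟩
  · rintro ⟨w, hw, rfl⟩
    exact ⟨w, hw, (summable_norm_apply_of_norm_le hL fun i => hC _ (hw i)).of_norm.hasSum⟩

theorem isCompact_seriesRange [CompleteSpace F] (hL : Summable fun i => ‖L i‖)
    (hD : IsCompact D) : IsCompact (seriesRange L D) := by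
  obtain ⟨C, hC⟩ := hD.isBounded.exists_norm_le
  rw [seriesRange_eq_image hL hC]
  exact (isCompact_univ_pi fun _ => hD).image_of_continuousOn (continuousOn_tsum_apply hL hC)

theorem seriesRange_nonempty [CompleteSpace F] (hL : Summable fun i => ‖L i‖)
    (hD : D.Nonempty) : (seriesRange L D).Nonempty := by
  obtain ⟨d, hd⟩ := hD
  have hsum : Summable fun i => ‖L i d‖ := summable_norm_apply_of_norm_le hL fun _ => le_rfl
  exact ⟨_, fun _ => d, fun _ => hd, hsum.of_norm.hasSum⟩

theorem convex_seriesRange (hD : Convex ℝ D) : Convex ℝ (seriesRange L D) := by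
  rintro _ ⟨w, hw, hws⟩ _ ⟨v, hv, hvt⟩ a b ha hb hab
  refine ⟨fun i => a • w i + b • v i, fun i => hD (hw i) (hv i) ha hb hab, ?_⟩
  simpa only [map_add, map_smul] using (hws.const_smul a).add (hvt.const_smul b)

end SeriesRange

/-- If `∑_i ‖A_K^i‖ < ∞` and `D` is nonempty and compact, then all defining
series of `S_∞ = ⊕_i A_K^i G D` converge absolutely, `S_∞` is nonempty and
compact; if moreover `D` is convex then so is `S_∞`. -/
theorem Sinf_nonempty_compact_convex (N p : ℕ)
    (AK : EuclideanSpace ℝ (Fin N) →L[ℝ] EuclideanSpace ℝ (Fin N))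
    (hAK : Summable (fun i : ℕ => ‖AK ^ i‖))
    (G : EuclideanSpace ℝ (Fin p) →L[ℝ] EuclideanSpace ℝ (Fin N))
    (D : Set (EuclideanSpace ℝ (Fin p)))
    (hne : D.Nonempty) (hcomp : IsCompact D) :
    (∀ w : ℕ → EuclideanSpace ℝ (Fin p), (∀ i : ℕ, w i ∈ D) →
        Summable (fun i : ℕ => ‖(AK ^ i) (G (w i))‖)) ∧
    (Sinf AK G D).Nonempty ∧
    IsCompact (Sinf AK G D) ∧
    (Convex ℝ D → Convex ℝ (Sinf AK G D)) := by
  have hL : Summable fun i => ‖(AK ^ i).comp G‖ :=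
    (hAK.mul_right ‖G‖).of_nonneg_of_le (fun _ => norm_nonneg _)
      fun i => (AK ^ i).opNorm_comp_le G
  have hSinf : Sinf AK G D = seriesRange (fun i => (AK ^ i).comp G) D := rfl
  obtain ⟨C, hC⟩ := hcomp.isBounded.exists_norm_le
  rw [hSinf]
  exact ⟨fun w hw => summable_norm_apply_of_norm_le hL fun i => hC _ (hw i),
    seriesRange_nonempty hL hne, isCompact_seriesRange hL hcomp, convex_seriesRange⟩
end

section
/- Let A_K be an N×N real matrix with ∑_{i=0}^∞ ‖A_K^i‖ < ∞, let G be an N×p real matrix, and let D ⊆ ℝ^p be nonempty and compact. Then the set S_∞ := { ∑_{i=0}^∞ A_K^i G w_i : w_i ∈ D } satisfies A_K·S_∞ ⊕ G·D = S_∞; in particular, for every e ∈ S_∞ and d ∈ D one has A_K e + G d ∈ S_∞, i.e., S_∞ is robustly positively invariant for the deviation dynamics e_{k+1} = A_K e_k + G d_k with d_k ∈ D. Moreover, if 0 ∈ D, then the finite sums S_k := { ∑_{i=0}^{k} A_K^i G w_i : w_i ∈ D } satisfy S_k ⊆ S_∞ for every k ∈ ℕ. -/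
open scoped Pointwise BigOperators

/-- The finite Minkowski sums `S_k = ⊕_{i=0}^{k} A_K^i G D`. -/
def Sfin {N p : ℕ}
    (AK : EuclideanSpace ℝ (Fin N) →L[ℝ] EuclideanSpace ℝ (Fin N))
    (G : EuclideanSpace ℝ (Fin p) →L[ℝ] EuclideanSpace ℝ (Fin N))
    (D : Set (EuclideanSpace ℝ (Fin p))) (k : ℕ) : Set (EuclideanSpace ℝ (Fin N)) :=
  {s | ∃ w : ℕ → EuclideanSpace ℝ (Fin p), (∀ i : ℕ, w i ∈ D) ∧
        s = ∑ i ∈ Finset.range (k + 1), (AK ^ i) (G (w i))}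

theorem HasSum.pow_apply_of_succ {R M : Type*} [Semiring R] [AddCommMonoid M] [Module R M]
    [TopologicalSpace M] [ContinuousAdd M] {A : M →L[R] M} {v : ℕ → M} {t : M}
    (h : HasSum (fun i => (A ^ i) (v (i + 1))) t) :
    HasSum (fun i => (A ^ i) (v i)) (A t + v 0) := by
  have hA : HasSum (fun i => (A ^ (i + 1)) (v (i + 1))) (A t) := by
    simpa only [pow_succ', mul_apply_eq_comp] using h.mapL A
  rw [add_comm]
  simpa only [pow_zero, one_apply_eq_self] using HasSum.zero_add (f := fun i => (A ^ i) (v i)) hA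

theorem ContinuousLinearMap.summable_pow_apply {𝕜 E : Type*} [NontriviallyNormedField 𝕜]
    [NormedAddCommGroup E] [NormedSpace 𝕜 E] [CompleteSpace E] {A : E →L[𝕜] E}
    (hA : Summable fun i => ‖A ^ i‖) {v : ℕ → E} (hv : Bornology.IsBounded (Set.range v)) :
    Summable fun i => (A ^ i) (v i) := by
  obtain ⟨C, hC⟩ := isBounded_iff_forall_norm_le.mp hv
  refine (hA.mul_right C).of_norm_bounded fun i => ?_
  calc ‖(A ^ i) (v i)‖ ≤ ‖A ^ i‖ * ‖v i‖ := (A ^ i).le_opNorm _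
    _ ≤ ‖A ^ i‖ * C := by gcongr; exact hC _ (Set.mem_range_self i)

section MinkowskiSum

variable {N p : ℕ} {AK : EuclideanSpace ℝ (Fin N) →L[ℝ] EuclideanSpace ℝ (Fin N)}
  {G : EuclideanSpace ℝ (Fin p) →L[ℝ] EuclideanSpace ℝ (Fin N)} {D : Set (EuclideanSpace ℝ (Fin p))}

theorem add_mem_Sinf {e : EuclideanSpace ℝ (Fin N)} (he : e ∈ Sinf AK G D)
    {d : EuclideanSpace ℝ (Fin p)} (hd : d ∈ D) : AK e + G d ∈ Sinf AK G D := by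
  obtain ⟨w, hw, hsum⟩ := he
  let w' : ℕ → EuclideanSpace ℝ (Fin p) := fun | 0 => d | i + 1 => w i
  exact ⟨w', fun | 0 => hd | i + 1 => hw i,
    HasSum.pow_apply_of_succ (v := fun i => G (w' i)) hsum⟩

theorem image_add_image_subset_Sinf : AK '' Sinf AK G D + G '' D ⊆ Sinf AK G D :=
  Set.add_subset_iff.mpr <| by
    rintro _ ⟨e, he, rfl⟩ _ ⟨d, hd, rfl⟩
    exact add_mem_Sinf he hd

theorem Sinf_subset_image_add_image (hAK : Summable fun i => ‖AK ^ i‖)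
    (hD : Bornology.IsBounded D) : Sinf AK G D ⊆ AK '' Sinf AK G D + G '' D := by
  rintro s ⟨w, hw, hsum⟩
  have htail : Summable fun i => (AK ^ i) (G (w (i + 1))) := by
    refine ContinuousLinearMap.summable_pow_apply hAK ((hD.image G).subset ?_)
    rintro _ ⟨i, rfl⟩
    exact Set.mem_image_of_mem G (hw (i + 1))
  have hs : s = AK (∑' i, (AK ^ i) (G (w (i + 1)))) + G (w 0) :=
    hsum.unique (HasSum.pow_apply_of_succ (v := fun i => G (w i)) htail.hasSum)
  rw [hs]
  exact Set.add_mem_add ⟨_, ⟨fun i => w (i + 1), fun i => hw (i + 1), htail.hasSum⟩, rfl⟩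
    (Set.mem_image_of_mem G (hw 0))

theorem Sfin_subset_Sinf (h0 : 0 ∈ D) (k : ℕ) : Sfin AK G D k ⊆ Sinf AK G D := by
  rintro _ ⟨w, hw, rfl⟩
  refine ⟨fun i => if i ≤ k then w i else 0, fun i => ?_, ?_⟩
  · dsimp only
    split_ifs
    exacts [hw i, h0]
  · convert hasSum_sum_of_ne_finset_zero (L := SummationFilter.unconditional ℕ)
      (s := Finset.range (k + 1)) fun i hi => ?_ using 1
    · refine Finset.sum_congr rfl fun i hi => ?_
      dsimp only
      rw [if_pos (Nat.lt_succ_iff.mp (Finset.mem_range.mp hi))]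
    · rw [Finset.mem_range, Nat.lt_succ_iff] at hi
      dsimp only
      rw [if_neg hi, map_zero, map_zero]

end MinkowskiSum

theorem Sinf_robust_positive_invariance_general (N p : ℕ)
    (AK : EuclideanSpace ℝ (Fin N) →L[ℝ] EuclideanSpace ℝ (Fin N))
    (hAK : Summable (fun i : ℕ => ‖AK ^ i‖))
    (G : EuclideanSpace ℝ (Fin p) →L[ℝ] EuclideanSpace ℝ (Fin N))
    (D : Set (EuclideanSpace ℝ (Fin p)))
    (hcomp : IsCompact D) :
    ((fun e => AK e) '' Sinf AK G D + (fun w => G w) '' D = Sinf AK G D) ∧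
    (∀ e ∈ Sinf AK G D, ∀ d ∈ D, AK e + G d ∈ Sinf AK G D) ∧
    ((0 : EuclideanSpace ℝ (Fin p)) ∈ D →
      ∀ k : ℕ, Sfin AK G D k ⊆ Sinf AK G D) := by
  exact ⟨image_add_image_subset_Sinf.antisymm (Sinf_subset_image_add_image hAK hcomp.isBounded),
    fun _ he _ hd => add_mem_Sinf he hd, Sfin_subset_Sinf⟩

/-- `S_∞` satisfies `A_K·S_∞ ⊕ G·D = S_∞`; in particular it is robustly
positively invariant for `e_{k+1} = A_K e_k + G d_k`, `d_k ∈ D`; moreover, if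
`0 ∈ D` then `S_k ⊆ S_∞` for every `k`. -/
theorem Sinf_robust_positive_invariance (N p : ℕ)
    (AK : EuclideanSpace ℝ (Fin N) →L[ℝ] EuclideanSpace ℝ (Fin N))
    (hAK : Summable (fun i : ℕ => ‖AK ^ i‖))
    (G : EuclideanSpace ℝ (Fin p) →L[ℝ] EuclideanSpace ℝ (Fin N))
    (D : Set (EuclideanSpace ℝ (Fin p)))
    (hne : D.Nonempty) (hcomp : IsCompact D) :
    ((fun e => AK e) '' Sinf AK G D + (fun w => G w) '' D = Sinf AK G D) ∧
    (∀ e ∈ Sinf AK G D, ∀ d ∈ D, AK e + G d ∈ Sinf AK G D) ∧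
    ((0 : EuclideanSpace ℝ (Fin p)) ∈ D →
      ∀ k : ℕ, Sfin AK G D k ⊆ Sinf AK G D) :=
  Sinf_robust_positive_invariance_general N p AK hAK G D hcomp
end

section
/- Let S ⊆ ℝ^N be an absorbent set with ‖s‖ ≤ β for all s ∈ S (β > 0), let L ⊆ ℝ^N be a linear subspace, and let γ > 0 be such that { y ∈ L : ‖y‖ ≤ γ } ⊆ S. Let x̃ ∈ ℝ^N and let x be the orthogonal projection of x̃ onto L. Then p[S ∩ L](x) ≤ (β/γ) · p[S](x̃). -/
open Metric

-- For `x ≠ 0`, the witness is `(γ / ‖x‖) • x ∈ L`, of norm exactly `γ`.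
theorem gauge_inter_submodule_le_norm_div {E : Type*} [NormedAddCommGroup E] [NormedSpace ℝ E]
    {s : Set E} {L : Submodule ℝ E} {γ : ℝ} (hγ : 0 < γ) (hγs : {y : E | y ∈ L ∧ ‖y‖ ≤ γ} ⊆ s)
    {x : E} (hx : x ∈ L) : gauge (s ∩ L) x ≤ ‖x‖ / γ := by
  rcases eq_or_ne x 0 with rfl | hx0
  · simp
  have ha : 0 < ‖x‖ / γ := div_pos (norm_pos_iff.2 hx0) hγ
  refine gauge_le_of_mem ha.le ⟨(‖x‖ / γ)⁻¹ • x, ⟨hγs ⟨L.smul_mem _ hx, ?_⟩, L.smul_mem _ hx⟩,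
    smul_inv_smul₀ ha.ne' x⟩
  rw [norm_smul, Real.norm_of_nonneg (inv_nonneg.2 ha.le), inv_div,
    div_mul_cancel₀ _ (norm_ne_zero_iff.2 hx0)]

theorem norm_le_mul_gauge_of_subset_closedBall {E : Type*} [NormedAddCommGroup E]
    [NormedSpace ℝ E] {s : Set E} {β : ℝ} (hs : Absorbent ℝ s) (hβ : 0 < β)
    (hsβ : s ⊆ closedBall 0 β) (x : E) : ‖x‖ ≤ β * gauge s x :=
  (div_le_iff₀' hβ).1 (le_gauge_of_subset_closedBall hs hβ.le hsβ)

/-- Let `S ⊆ ℝ^N` be absorbent with `‖s‖ ≤ β` on `S` (`β > 0`), let `L` be a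
linear subspace and `γ > 0` with `{y ∈ L : ‖y‖ ≤ γ} ⊆ S`. If `x` is the
orthogonal projection of `x̃` onto `L`, then
`p[S ∩ L](x) ≤ (β/γ) ⬝ p[S](x̃)`. -/
theorem gauge_inter_subspace_le (N : ℕ) (S : Set (EuclideanSpace ℝ (Fin N)))
    (hab : Absorbent ℝ S) (β : ℝ) (hβ : 0 < β) (hS : ∀ s ∈ S, ‖s‖ ≤ β)
    (L : Submodule ℝ (EuclideanSpace ℝ (Fin N)))
    (γ : ℝ) (hγ : 0 < γ) (hγS : {y : EuclideanSpace ℝ (Fin N) | y ∈ L ∧ ‖y‖ ≤ γ} ⊆ S)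
    (xt : EuclideanSpace ℝ (Fin N)) :
    gauge (S ∩ (L : Set (EuclideanSpace ℝ (Fin N))))
        ((L.orthogonalProjectionOnto xt : L) : EuclideanSpace ℝ (Fin N)) ≤
      (β / γ) * gauge S xt := by
  have hSβ : S ⊆ closedBall 0 β := fun s hs ↦ mem_closedBall_zero_iff.2 (hS s hs)
  calc gauge (S ∩ L) (L.orthogonalProjectionOnto xt : EuclideanSpace ℝ (Fin N))
      ≤ ‖L.orthogonalProjectionOnto xt‖ / γ :=
        gauge_inter_submodule_le_norm_div hγ hγS (L.orthogonalProjectionOnto xt).2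
    _ ≤ ‖xt‖ / γ := by gcongr; exact L.norm_orthogonalProjectionOnto_apply_le xt
    _ ≤ β * gauge S xt / γ := by gcongr; exact norm_le_mul_gauge_of_subset_closedBall hab hβ hSβ xt
    _ = β / γ * gauge S xt := by ring
end

section
/- Let A_K be an N×N real matrix with ∑_{i=0}^∞ ‖A_K^i‖ < ∞, let G be an N×p real matrix, let D ⊆ ℝ^p be nonempty and compact, let a ∈ ℕ and ε > 0. Set δ* := max_{d∈D} ‖Gd‖ and τ := δ* · ∑_{i=a+1}^∞ ‖A_K^i‖. If every finite sum ∑_{i=0}^{a} A_K^i G d_i with d_i ∈ D satisfies ‖∑_{i=0}^{a} A_K^i G d_i‖ < ε − τ, then S_∞ := { ∑_{i=0}^∞ A_K^i G w_i : w_i ∈ D } is contained in the open ball of radius ε centered at the origin. (Thus the stabilising inclusion ⊕_{i∈ℕ} A_K^i G D ⊆ B_ε can be verified by a finitely determined computation.) -/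
/-!
Split a point `∑ᵢ A_K^i G wᵢ` of `S_∞` after the index `a`. The head is one of the truncated
sums, of norm `< ε - τ` by hypothesis. Every `‖G wᵢ‖` is at most `δ*`, the supremum of the
continuous function `‖G ·‖` over the compact set `D`, so the tail has norm at most
`δ* ∑_{i>a} ‖A_K^i‖ = τ`.
-/

open scoped BigOperators

theorem norm_tsum_apply_le_mul_tsum_norm {ι 𝕜 E F : Type*} [NontriviallyNormedField 𝕜]
    [NormedAddCommGroup E] [NormedSpace 𝕜 E] [NormedAddCommGroup F] [NormedSpace 𝕜 F]
    {T : ι → E →L[𝕜] F} {v : ι → E} {δ : ℝ} (hT : Summable fun i => ‖T i‖)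
    (hv : ∀ i, ‖v i‖ ≤ δ) :
    ‖∑' i, T i (v i)‖ ≤ δ * ∑' i, ‖T i‖ := by
  have hbound : ∀ i, ‖T i (v i)‖ ≤ ‖T i‖ * δ := fun i =>
    (T i).le_of_opNorm_le_of_le le_rfl (hv i)
  have hsumm : Summable fun i => ‖T i (v i)‖ :=
    (hT.mul_right δ).of_nonneg_of_le (fun _ => norm_nonneg _) hbound
  calc ‖∑' i, T i (v i)‖ ≤ ∑' i, ‖T i (v i)‖ := norm_tsum_le_tsum_norm hsumm
    _ ≤ ∑' i, ‖T i‖ * δ := hsumm.tsum_le_tsum hbound (hT.mul_right δ)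
    _ = δ * ∑' i, ‖T i‖ := by rw [tsum_mul_right, mul_comm]

theorem Sinf_subset_ball_of_finite_check_general (N p : ℕ)
    (AK : EuclideanSpace ℝ (Fin N) →L[ℝ] EuclideanSpace ℝ (Fin N))
    (hAK : Summable (fun i : ℕ => ‖AK ^ i‖))
    (G : EuclideanSpace ℝ (Fin p) →L[ℝ] EuclideanSpace ℝ (Fin N))
    (D : Set (EuclideanSpace ℝ (Fin p)))
    (hcomp : IsCompact D)
    (a : ℕ) (ε : ℝ)
    (δstar τ : ℝ)
    (hδ : δstar = sSup ((fun d => ‖G d‖) '' D))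
    (hτ : τ = δstar * ∑' i : ℕ, ‖AK ^ (a + 1 + i)‖)
    (hfin : ∀ d : ℕ → EuclideanSpace ℝ (Fin p), (∀ i : ℕ, d i ∈ D) →
        ‖∑ i ∈ Finset.range (a + 1), (AK ^ i) (G (d i))‖ < ε - τ) :
    Sinf AK G D ⊆ Metric.ball (0 : EuclideanSpace ℝ (Fin N)) ε := by
  rintro s ⟨w, hw, hsum⟩
  have hGw : ∀ i, ‖G (w i)‖ ≤ δstar := fun i =>
    hδ ▸ le_csSup (hcomp.image G.continuous.norm).bddAbove ⟨w i, hw i, rfl⟩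
  have htail : ‖∑' i, (AK ^ (i + (a + 1))) (G (w (i + (a + 1))))‖ ≤ τ := by
    simp only [add_comm _ (a + 1)]
    exact hτ ▸ norm_tsum_apply_le_mul_tsum_norm
      (hAK.comp_injective (add_right_injective (a + 1))) fun i => hGw _
  rw [Metric.mem_ball, dist_zero_right, ← hsum.tsum_eq,
    ← hsum.summable.sum_add_tsum_nat_add (a + 1)]
  calc _ ≤ ‖∑ i ∈ Finset.range (a + 1), (AK ^ i) (G (w i))‖
        + ‖∑' i, (AK ^ (i + (a + 1))) (G (w (i + (a + 1))))‖ := norm_add_le _ _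
    _ < ε - τ + τ := add_lt_add_of_lt_of_le (hfin w hw) htail
    _ = ε := sub_add_cancel ε τ

/-- Finitely determined verification of the stabilising inclusion: with
`δ* = max_{d∈D} ‖Gd‖` and `τ = δ* ∑_{i=a+1}^∞ ‖A_K^i‖`, if every truncated sum
`∑_{i=0}^{a} A_K^i G d_i`, `d_i ∈ D`, has norm `< ε − τ`, then
`S_∞ = ⊕_{i∈ℕ} A_K^i G D ⊆ B_ε`. -/
theorem Sinf_subset_ball_of_finite_check (N p : ℕ)
    (AK : EuclideanSpace ℝ (Fin N) →L[ℝ] EuclideanSpace ℝ (Fin N))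
    (hAK : Summable (fun i : ℕ => ‖AK ^ i‖))
    (G : EuclideanSpace ℝ (Fin p) →L[ℝ] EuclideanSpace ℝ (Fin N))
    (D : Set (EuclideanSpace ℝ (Fin p)))
    (hne : D.Nonempty) (hcomp : IsCompact D)
    (a : ℕ) (ε : ℝ) (hε : 0 < ε)
    (δstar τ : ℝ)
    (hδ : δstar = sSup ((fun d => ‖G d‖) '' D))
    (hτ : τ = δstar * ∑' i : ℕ, ‖AK ^ (a + 1 + i)‖)
    (hfin : ∀ d : ℕ → EuclideanSpace ℝ (Fin p), (∀ i : ℕ, d i ∈ D) →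
        ‖∑ i ∈ Finset.range (a + 1), (AK ^ i) (G (d i))‖ < ε - τ) :
    Sinf AK G D ⊆ Metric.ball (0 : EuclideanSpace ℝ (Fin N)) ε :=
  Sinf_subset_ball_of_finite_check_general N p AK hAK G D hcomp a ε δstar τ hδ hτ hfin
end
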